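/- arXiv:2310.19598 — 2 statements merged into one kernel-verified Lean document; each statement's English description precedes it below -/
import Mathlib

section
/- Suppose a continuous function X solves Ẍ(t) + (2/t)Ẋ(t) + (2/t^{3/2})∇f(X(t)) = 0 with f convex, C¹, minimizer x*, and the integral ∫_{t₀}^{∞} √t (f(X(t)) − f*) dt is finite. Then liminf_{t→∞} t^{3/2} log t · (f(X(t)) − f*) = 0; in particular there exists a sequence t_l → ∞ with f(X(t_l)) − f* = o(1/(t_l^{3/2} log t_l)). -/
/-!
The integrand `√t (f(X t) - f*)` is `g t / (t log t)` with
`g t = t^{3/2} log t (f(X t) - f*) ≥ 0`. If `g ≥ ε > 0` for all large `t`, then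
`1 / (t log t) ≤ √t (f(X t) - f*) / ε` would be integrable at infinity, which it is not since
`log (log t)` is an unbounded primitive. Hence `0` is a cluster point of `g` at infinity: it is
the liminf of `g`, and the limit of `g` along some sequence `t_l → ∞`.
-/

open Real MeasureTheory Filter Set

theorem not_integrableAtFilter_inv_mul_log_atTop :
    ¬ IntegrableAtFilter (fun t : ℝ => (t * log t)⁻¹) atTop := by
  rintro ⟨s, hs, hint⟩
  have hderiv : ∀ᶠ t in atTop, HasDerivAt (fun t => log (log t)) (t * log t)⁻¹ t := by
    filter_upwards [eventually_gt_atTop 1] with t ht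
    convert (hasDerivAt_log (by linarith : t ≠ 0)).log (log_pos ht).ne' using 1
    rw [mul_inv, div_eq_mul_inv, mul_comm]
  exact not_integrableOn_of_tendsto_norm_atTop_of_deriv_isBigO_filter atTop hs
    (hderiv.mono fun t ht => ht.differentiableAt)
    (tendsto_norm_atTop_atTop.comp (tendsto_log_atTop.comp tendsto_log_atTop))
    (EventuallyEq.isBigO (hderiv.mono fun t ht => ht.deriv)) hint

theorem frequently_lt_mul_of_integrableAtFilter {α : Type*} [MeasurableSpace α] {μ : Measure α}
    {l : Filter α} [l.IsMeasurablyGenerated] {φ w : α → ℝ} (hφ : IntegrableAtFilter φ l μ)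
    (hw : StronglyMeasurableAtFilter w l μ) (hw_nonneg : ∀ᶠ x in l, 0 ≤ w x)
    (hw_int : ¬ IntegrableAtFilter w l μ) {ε : ℝ} (hε : 0 < ε) :
    ∃ᶠ x in l, φ x < ε * w x := by
  by_contra! hdom
  obtain ⟨s, hsl, hφs⟩ := hφ
  obtain ⟨t, htl, hwt⟩ := hw
  obtain ⟨u, hul, hu, hbound⟩ := (hdom.and hw_nonneg).exists_measurable_mem
  refine hw_int ⟨u ∩ (s ∩ t), inter_mem hul (inter_mem hsl htl), ?_⟩
  refine Integrable.mono'
    ((hφs.mono_set (inter_subset_right.trans inter_subset_left)).const_mul ε⁻¹)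
    (hwt.mono_set (inter_subset_right.trans inter_subset_right)) ?_
  refine ae_restrict_of_ae_restrict_of_subset inter_subset_left (ae_restrict_of_forall_mem hu ?_)
  intro x hx
  obtain ⟨hdom_x, hw_x⟩ := hbound x hx
  rw [norm_of_nonneg hw_x, ← div_eq_inv_mul, le_div_iff₀ hε, mul_comm]
  exact hdom_x

theorem mapClusterPt_of_eventually_le_of_frequently_lt {ι : Type*} {l : Filter ι} {u : ι → ℝ}
    {a : ℝ} (hle : ∀ᶠ i in l, a ≤ u i) (hlt : ∀ ε > 0, ∃ᶠ i in l, u i < a + ε) :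
    MapClusterPt a l u := by
  rw [(nhds_basis_Ioo_pos a).mapClusterPt_iff_frequently]
  intro ε hε
  exact ((hlt ε hε).and_eventually hle).mono fun i ⟨hlt_i, hle_i⟩ => ⟨by linarith, hlt_i⟩

theorem liminf_eq_of_mapClusterPt_of_eventually_le {ι : Type*} {l : Filter ι} {u : ι → ℝ}
    {a : ℝ} (ha : MapClusterPt a l u) (hle : ∀ᶠ i in l, a ≤ u i) : liminf u l = a :=
  le_antisymm (ha.liminf_le ⟨a, hle⟩) <| le_liminf_of_le
    (IsCoboundedUnder.of_frequently_le (ha.frequently (eventually_le_nhds (lt_add_one a)))) hle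

theorem rpow_three_halves_eq_mul_sqrt {t : ℝ} (ht : 0 < t) : t ^ ((3:ℝ)/2) = t * √t := by
  rw [show (3:ℝ)/2 = 1 + 1/2 by norm_num, rpow_add ht, rpow_one, ← sqrt_eq_rpow]

theorem sgdm_ode_liminf_general
    {n : ℕ} (f : EuclideanSpace ℝ (Fin n) → ℝ)
    (xstar : EuclideanSpace ℝ (Fin n)) (hmin : ∀ y, f xstar ≤ f y)
    (t₀ : ℝ)
    (X : ℝ → EuclideanSpace ℝ (Fin n))
    (hint : IntegrableOn (fun t => Real.sqrt t * (f (X t) - f xstar)) (Set.Ioi t₀)) :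
    liminf (fun t : ℝ => t ^ ((3:ℝ)/2) * Real.log t * (f (X t) - f xstar)) atTop = 0 ∧
    ∃ tl : ℕ → ℝ, Tendsto tl atTop atTop ∧
      Tendsto (fun l => (tl l) ^ ((3:ℝ)/2) * Real.log (tl l) * (f (X (tl l)) - f xstar))
        atTop (nhds 0) := by
  set g := fun t : ℝ => t ^ ((3:ℝ)/2) * Real.log t * (f (X t) - f xstar)
  have hg_eq : ∀ t > 0, g t = t * log t * (√t * (f (X t) - f xstar)) := fun t ht => by
    simp only [g, rpow_three_halves_eq_mul_sqrt ht]
    ring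
  have hg_nonneg : ∀ᶠ t in atTop, 0 ≤ g t := by
    filter_upwards [eventually_ge_atTop 1] with t ht
    rw [hg_eq t (by linarith)]
    exact mul_nonneg (mul_nonneg (by linarith) (log_nonneg ht))
      (mul_nonneg (sqrt_nonneg t) (sub_nonneg.2 (hmin (X t))))
  have hg_small : ∀ ε > 0, ∃ᶠ t in atTop, g t < 0 + ε := by
    intro ε hε
    have hw_meas : Measurable fun t : ℝ => (t * log t)⁻¹ := by fun_prop
    have hfreq := frequently_lt_mul_of_integrableAtFilter ⟨_, Ioi_mem_atTop t₀, hint⟩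
      hw_meas.aestronglyMeasurable.stronglyMeasurableAtFilter
      ((eventually_gt_atTop 1).mono fun t ht => by have := log_pos ht; positivity)
      not_integrableAtFilter_inv_mul_log_atTop hε
    refine (hfreq.and_eventually (eventually_gt_atTop 1)).mono fun t ⟨hlt, ht⟩ => ?_
    have hpos : 0 < t * log t := mul_pos (by linarith) (log_pos ht)
    calc g t = t * log t * (√t * (f (X t) - f xstar)) := hg_eq t (by linarith)
      _ < t * log t * (ε * (t * log t)⁻¹) := mul_lt_mul_of_pos_left hlt hpos
      _ = 0 + ε := by rw [zero_add, mul_comm ε, mul_inv_cancel_left₀ hpos.ne']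
  have hg_cluster := mapClusterPt_of_eventually_le_of_frequently_lt hg_nonneg hg_small
  obtain ⟨tl, hg_tl, htl⟩ := hg_cluster.exists_seq_tendsto
  exact ⟨liminf_eq_of_mapClusterPt_of_eventually_le hg_cluster hg_nonneg, tl, htl, hg_tl⟩

/-- If along a solution of the SGDM limiting ODE the integral
`∫_{t₀}^∞ √t (f(X t) - f*) dt` is finite, then
`liminf_{t→∞} t^{3/2} (log t) (f(X t) - f*) = 0`; in particular there is a
sequence `t_l → ∞` with `f(X(t_l)) - f* = o(1/(t_l^{3/2} log t_l))`. -/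
theorem sgdm_ode_liminf
    {n : ℕ} (f : EuclideanSpace ℝ (Fin n) → ℝ)
    (hfconv : ConvexOn ℝ Set.univ f) (hf : ContDiff ℝ 1 f)
    (xstar : EuclideanSpace ℝ (Fin n)) (hmin : ∀ y, f xstar ≤ f y)
    (t₀ : ℝ) (ht₀ : 0 < t₀)
    (X X' X'' : ℝ → EuclideanSpace ℝ (Fin n))
    (hXcont : ContinuousOn X (Set.Ioi t₀))
    (hX : ∀ t > t₀, HasDerivAt X (X' t) t)
    (hX' : ∀ t > t₀, HasDerivAt X' (X'' t) t)
    (hODE : ∀ t > t₀,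
      X'' t + (2 / t) • X' t + (2 / t ^ ((3:ℝ)/2)) • gradient f (X t) = 0)
    (hint : IntegrableOn (fun t => Real.sqrt t * (f (X t) - f xstar)) (Set.Ioi t₀)) :
    liminf (fun t : ℝ => t ^ ((3:ℝ)/2) * Real.log t * (f (X t) - f xstar)) atTop = 0 ∧
    ∃ tl : ℕ → ℝ, Tendsto tl atTop atTop ∧
      Tendsto (fun l => (tl l) ^ ((3:ℝ)/2) * Real.log (tl l) * (f (X (tl l)) - f xstar))
        atTop (nhds 0) :=
  sgdm_ode_liminf_general f xstar hmin t₀ X hint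
end

section
/- Let (X_k) be a nonnegative adapted process on a filtered probability space satisfying E[X_{k+1} | ℱ_k] ≤ (1 + c_k) X_k + b_k almost surely, where c_k, b_k ≥ 0 are deterministic with Σ c_k < ∞ and Σ b_k < ∞. Then X_k converges almost surely to a finite random variable (Robbins–Siegmund type result, specialized to deterministic coefficients). -/
/-!
Divide `X k` by the running product `P k = ∏_{j<k} (1 + c j)` and subtract the accumulated
discounted drift `S k = ∑_{j<k} b j / P (j + 1)`: the recursion becomes exactly the supermartingale
inequality for `Y k = X k / P k - S k`. Since `X ≥ 0` and `S k ≤ ∑ b`, the supermartingale `Y` is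
bounded below by a constant, hence converges a.s. by Doob's theorem; `P` and `S` converge because
`c` and `b` are summable, so `X k = (Y k + S k) * P k` converges as well.
-/

open MeasureTheory ProbabilityTheory Filter Finset Topology

namespace MeasureTheory

variable {Ω : Type*} {m0 : MeasurableSpace Ω} {μ : Measure Ω} [IsFiniteMeasure μ]
  {ℱ : Filtration ℕ m0} {f : ℕ → Ω → ℝ}

theorem Supermartingale.exists_ae_tendsto_of_nonneg (hf : Supermartingale f ℱ μ)
    (hnonneg : ∀ n, 0 ≤ᵐ[μ] f n) :
    ∀ᵐ ω ∂μ, ∃ l, Tendsto (fun n => f n ω) atTop (𝓝 l) := by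
  have hbdd : ∀ n, eLpNorm ((-f) n) 1 μ ≤ ENNReal.ofReal (∫ ω, f 0 ω ∂μ) := fun n => by
    rw [Pi.neg_apply, eLpNorm_neg, eLpNorm_one_eq_lintegral_enorm,
      ← ofReal_integral_norm_eq_lintegral_enorm (hf.integrable n)]
    refine ENNReal.ofReal_le_ofReal ?_
    calc ∫ ω, ‖f n ω‖ ∂μ = ∫ ω, f n ω ∂μ :=
          integral_congr_ae <| (hnonneg n).mono fun ω hω => Real.norm_of_nonneg hω
      _ ≤ ∫ ω, f 0 ω ∂μ := by
          simpa using hf.setIntegral_le (Nat.zero_le n) MeasurableSet.univ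
  filter_upwards [hf.neg.exists_ae_tendsto_of_bdd hbdd] with ω ⟨l, hl⟩
  exact ⟨-l, by simpa using hl.neg⟩

theorem Supermartingale.exists_ae_tendsto_of_forall_le (hf : Supermartingale f ℱ μ) {C : ℝ}
    (hC : ∀ n, ∀ᵐ ω ∂μ, C ≤ f n ω) :
    ∀ᵐ ω ∂μ, ∃ l, Tendsto (fun n => f n ω) atTop (𝓝 l) := by
  have hshift := (hf.sub_martingale (martingale_const ℱ μ C)).exists_ae_tendsto_of_nonneg
    fun n => (hC n).mono fun ω hω => sub_nonneg.mpr hω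
  filter_upwards [hshift] with ω ⟨l, hl⟩
  exact ⟨l + C, by simpa using hl.add_const C⟩

noncomputable def robbinsSiegmundProcess (a b : ℕ → ℝ) (X : ℕ → Ω → ℝ) (k : ℕ) (ω : Ω) : ℝ :=
  X k ω / ∏ j ∈ range k, a j - ∑ j ∈ range k, b j / ∏ i ∈ range (j + 1), a i

theorem supermartingale_robbinsSiegmundProcess {a b : ℕ → ℝ} {X : ℕ → Ω → ℝ}
    (ha : ∀ k, 0 < a k) (hadapted : Adapted ℱ X) (hint : ∀ k, Integrable (X k) μ)
    (hrec : ∀ k, ∀ᵐ ω ∂μ, μ[X (k + 1) | ℱ k] ω ≤ a k * X k ω + b k) :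
    Supermartingale (robbinsSiegmundProcess a b X) ℱ μ := by
  set P : ℕ → ℝ := fun k => ∏ j ∈ range k, a j
  set S : ℕ → ℝ := fun k => ∑ j ∈ range k, b j / P (j + 1)
  have hP : ∀ k, 0 < P k := fun k => prod_pos fun j _ => ha j
  have hY : ∀ k, robbinsSiegmundProcess a b X k = (P k)⁻¹ • X k - fun _ => S k := fun k => by
    ext ω; simp [robbinsSiegmundProcess, P, S, div_eq_inv_mul]
  refine supermartingale_nat (fun k => ?_) (fun k => ?_) fun k => ?_
  · rw [hY]
    exact (((hadapted k).const_smul _).sub measurable_const).stronglyMeasurable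
  · rw [hY]
    exact ((hint k).smul _).sub (integrable_const _)
  have hcondExp : μ[robbinsSiegmundProcess a b X (k + 1) | ℱ k]
      =ᵐ[μ] fun ω => (P (k + 1))⁻¹ * μ[X (k + 1) | ℱ k] ω - S (k + 1) := by
    rw [hY]
    filter_upwards [condExp_sub ((hint (k + 1)).smul (P (k + 1))⁻¹) (integrable_const _) (ℱ k),
      condExp_smul (μ := μ) (P (k + 1))⁻¹ (X (k + 1)) (ℱ k)] with ω hsub hsmul
    rw [hsub, Pi.sub_apply, hsmul, condExp_const (ℱ.le k)]
    rfl
  filter_upwards [hcondExp, hrec k] with ω hω hrecω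
  have hPsucc : P (k + 1) = P k * a k := prod_range_succ _ k
  have hSsucc : S (k + 1) = S k + b k / P (k + 1) := sum_range_succ _ k
  calc μ[robbinsSiegmundProcess a b X (k + 1) | ℱ k] ω
      = (P (k + 1))⁻¹ * μ[X (k + 1) | ℱ k] ω - S (k + 1) := hω
    _ ≤ (P (k + 1))⁻¹ * (a k * X k ω + b k) - S (k + 1) := by
      gcongr
      exact inv_nonneg.mpr (hP _).le
    _ = X k ω / P k - S k := by
      rw [hSsucc, hPsucc]
      field_simp [(hP k).ne', (ha k).ne']
      ring
    _ = robbinsSiegmundProcess a b X k ω := rfl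

theorem neg_tsum_le_robbinsSiegmundProcess {a b : ℕ → ℝ} {X : ℕ → Ω → ℝ} (ha : ∀ k, 0 < a k)
    (hb : ∀ k, 0 ≤ b k) (hX : ∀ k ω, 0 ≤ X k ω)
    (hsum : Summable fun j => b j / ∏ i ∈ range (j + 1), a i) (k : ℕ) (ω : Ω) :
    -∑' j, b j / ∏ i ∈ range (j + 1), a i ≤ robbinsSiegmundProcess a b X k ω := by
  have hterm : ∀ j, 0 ≤ b j / ∏ i ∈ range (j + 1), a i :=
    fun j => div_nonneg (hb j) (prod_pos fun i _ => ha i).le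
  have hdrift := hsum.sum_le_tsum (range k) fun j _ => hterm j
  have hfirst : 0 ≤ X k ω / ∏ j ∈ range k, a j := div_nonneg (hX k ω) (prod_pos fun j _ => ha j).le
  rw [robbinsSiegmundProcess]
  linarith

theorem tendsto_of_tendsto_robbinsSiegmundProcess {a b : ℕ → ℝ} {X : ℕ → Ω → ℝ} {p l : ℝ}
    {ω : Ω} (ha : ∀ k, 0 < a k) (hP : Tendsto (fun k => ∏ j ∈ range k, a j) atTop (𝓝 p))
    (hsum : Summable fun j => b j / ∏ i ∈ range (j + 1), a i)
    (hY : Tendsto (fun k => robbinsSiegmundProcess a b X k ω) atTop (𝓝 l)) :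
    Tendsto (fun k => X k ω) atTop
      (𝓝 ((l + ∑' j, b j / ∏ i ∈ range (j + 1), a i) * p)) := by
  refine ((hY.add hsum.hasSum.tendsto_sum_nat).mul hP).congr fun k => ?_
  rw [robbinsSiegmundProcess, sub_add_cancel, div_mul_cancel₀ _ (prod_pos fun j _ => ha j).ne']

end MeasureTheory

/-- Robbins–Siegmund with deterministic coefficients: if `X_k ≥ 0` is adapted and
integrable with `E[X_{k+1} | ℱ_k] ≤ (1 + c_k) X_k + b_k` a.s., where `c_k, b_k ≥ 0`
are deterministic and summable, then `X_k` converges almost surely to a finite limit. -/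
theorem robbins_siegmund_deterministic
    {Ω : Type*} {m : MeasurableSpace Ω} {μ : Measure Ω} [IsProbabilityMeasure μ]
    (ℱ : Filtration ℕ m) (X : ℕ → Ω → ℝ)
    (hadapted : Adapted ℱ X) (hint : ∀ k, Integrable (X k) μ)
    (hnonneg : ∀ k ω, 0 ≤ X k ω)
    (b c : ℕ → ℝ) (hb : ∀ k, 0 ≤ b k) (hc : ∀ k, 0 ≤ c k)
    (hbs : Summable b) (hcs : Summable c)
    (hrec : ∀ k, ∀ᵐ ω ∂μ,
      (μ[X (k+1) | ℱ k]) ω ≤ (1 + c k) * X k ω + b k) :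
    ∀ᵐ ω ∂μ, ∃ l : ℝ, Tendsto (fun k => X k ω) atTop (nhds l) := by
  have hone : ∀ k, 1 ≤ 1 + c k := fun k => le_add_of_nonneg_right (hc k)
  have hpos : ∀ k, 0 < 1 + c k := fun k => one_pos.trans_le (hone k)
  have hP := (Real.multipliable_one_add_of_summable hcs).tendsto_prod_tprod_nat
  have hsum : Summable fun j => b j / ∏ i ∈ range (j + 1), (1 + c i) :=
    hbs.of_nonneg_of_le (fun j => div_nonneg (hb j) (prod_pos fun i _ => hpos i).le)
      fun j => div_le_self (hb j) (one_le_prod fun i _ => hone i)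
  have hY := supermartingale_robbinsSiegmundProcess (a := fun k => 1 + c k) hpos hadapted hint hrec
  filter_upwards [hY.exists_ae_tendsto_of_forall_le fun k =>
    ae_of_all _ (neg_tsum_le_robbinsSiegmundProcess hpos hb hnonneg hsum k)] with ω ⟨l, hl⟩
  exact ⟨_, tendsto_of_tendsto_robbinsSiegmundProcess hpos hP hsum hl⟩
end
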